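/- (A contraction induces a contraction of endomorphism complexes.) Let R be a commutative ring and let E = (E^i, d_E) and F = (F^i, d_F) be cochain complexes of R-modules indexed by ℤ. Suppose given cochain maps φ : E → F and ψ : F → E with φ ∘ ψ = id_F, and a family of R-linear maps h = (h^i : E^i → E^{i−1}) satisfying, in each degree, ψ ∘ φ = id_E + d_E ∘ h + h ∘ d_E, together with the side conditions h ∘ h = 0, φ ∘ h = 0, h ∘ ψ = 0. Form the endomorphism complexes End•(E) and End•(F), whose degree-n component is the product over i of Hom_R(E^i, E^{i+n}) (respectively Hom_R(F^i, F^{i+n})), with differential D_E(f) = d_E ∘ f − (−1)^n f ∘ d_E for f of degree n (and similarly D_F). Define Φ : End•(E) → End•(F) by Φ(f) = φ ∘ f ∘ ψ, Ψ : End•(F) → End•(E) by Ψ(g) = ψ ∘ g ∘ φ, and H : End^n(E) → End^{n−1}(E) by H(f) = h ∘ f ∘ (ψ ∘ φ) + (−1)^n f ∘ h. Then D_E ∘ D_E = 0 and D_F ∘ D_F = 0, Φ and Ψ are cochain maps, Φ ∘ Ψ = id, Ψ ∘ Φ = id + D_E ∘ H + H ∘ D_E, H ∘ H = 0, Φ ∘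 H = 0, and H ∘ Ψ = 0; in other words, (Φ, Ψ, H) is a contraction from End•(E) onto End•(F). -/
import Mathlib


namespace EndComplexContraction

/-- The degree-`n` component of the endomorphism complex of a `ℤ`-indexed cochain complex
`E` of `R`-modules: the product over all `p` of `Hom_R(E p, E (p + n))`, encoded as
families of maps `E p →ₗ[R] E q` indexed by pairs `p q` with `p + n = q`. -/
abbrev EndCochain (R : Type*) [CommRing R] (E : ℤ → Type*)
    [∀ i, AddCommGroup (E i)] [∀ i, Module R (E i)] (n : ℤ) :=
  ∀ p q : ℤ, p + n = q → (E p →ₗ[R] E q)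

variable {R : Type*} [CommRing R] {E F : ℤ → Type*}
  [∀ i, AddCommGroup (E i)] [∀ i, Module R (E i)]
  [∀ i, AddCommGroup (F i)] [∀ i, Module R (F i)]

/-- The differential of the endomorphism complex:
`D(f) = d_E ∘ f - (-1)^n • f ∘ d_E` in degree `n`. -/
def endDiff (dE : ∀ p q : ℤ, p + 1 = q → (E p →ₗ[R] E q)) (n : ℤ)
    (f : EndCochain R E n) : EndCochain R E (n + 1) := fun p q _ =>
  dE (p + n) q (by omega) ∘ₗ f p (p + n) rfl
    - (n.negOnePow : ℤ) • (f (p + 1) q (by omega) ∘ₗ dE p (p + 1) rfl)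

/-- Conjugation by a pair of degreewise maps `φ : E → F`, `ψ : F → E`:
`f ↦ φ ∘ f ∘ ψ`. -/
def conjMap (φ : ∀ i, E i →ₗ[R] F i) (ψ : ∀ i, F i →ₗ[R] E i) (n : ℤ)
    (f : EndCochain R E n) : EndCochain R F n := fun p q hpq =>
  φ q ∘ₗ f p q hpq ∘ₗ ψ p

/-- The homotopy `H(f) = h ∘ f ∘ (ψ ∘ φ) + (-1)^n • f ∘ h` on the endomorphism complex. -/
def hMap (φ : ∀ i, E i →ₗ[R] F i) (ψ : ∀ i, F i →ₗ[R] E i)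
    (h : ∀ p q : ℤ, q + 1 = p → (E p →ₗ[R] E q)) (n : ℤ)
    (f : EndCochain R E n) : EndCochain R E (n - 1) := fun p q _ =>
  h (p + n) q (by omega) ∘ₗ f p (p + n) rfl ∘ₗ (ψ p ∘ₗ φ p)
    + (n.negOnePow : ℤ) • (f (p - 1) q (by omega) ∘ₗ h p (p - 1) (by omega))


lemma endDiff_eq (dE : ∀ p q : ℤ, p + 1 = q → (E p →ₗ[R] E q)) (n : ℤ)
    (f : EndCochain R E n) (p q pn p1 : ℤ) (h1 : p + n = pn) (h2 : p + 1 = p1)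
    (h3 : pn + 1 = q) (h4 : p1 + n = q) (hpq : p + (n+1) = q) :
    endDiff dE n f p q hpq
      = dE pn q h3 ∘ₗ f p pn h1 - (n.negOnePow : ℤ) • (f p1 q h4 ∘ₗ dE p p1 h2) := by
  subst h1 h2; rfl

lemma hMap_eq (φ : ∀ i, E i →ₗ[R] F i) (ψ : ∀ i, F i →ₗ[R] E i)
    (h : ∀ p q : ℤ, q + 1 = p → (E p →ₗ[R] E q)) (n : ℤ)
    (f : EndCochain R E n) (p q pn pm : ℤ) (h1 : p + n = pn) (h2 : p - 1 = pm)
    (h3 : q + 1 = pn) (h4 : pm + n = q) (h5 : pm + 1 = p) (hpq : p + (n-1) = q) :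
    hMap φ ψ h n f p q hpq
      = h pn q h3 ∘ₗ f p pn h1 ∘ₗ (ψ p ∘ₗ φ p)
        + (n.negOnePow : ℤ) • (f pm q h4 ∘ₗ h p pm h5) := by
  subst h1; have : pm = p - 1 := h2.symm; subst this; rfl

lemma conjMap_eq (φ : ∀ i, E i →ₗ[R] F i) (ψ : ∀ i, F i →ₗ[R] E i) (n : ℤ)
    (f : EndCochain R E n) (p q : ℤ) (hpq : p + n = q) :
    conjMap φ ψ n f p q hpq = φ q ∘ₗ f p q hpq ∘ₗ ψ p := rfl

lemma comp_comp_zero {A B C D : Type*} [AddCommGroup A] [AddCommGroup B] [AddCommGroup C]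
    [AddCommGroup D] [Module R A] [Module R B] [Module R C] [Module R D]
    (u : C →ₗ[R] D) (v : B →ₗ[R] C) (g : A →ₗ[R] B) (huv : u ∘ₗ v = 0) :
    u ∘ₗ (v ∘ₗ g) = 0 := by
  rw [← LinearMap.comp_assoc, huv, LinearMap.zero_comp]

lemma comp_rw₁ {A B C D : Type*} [AddCommGroup A] [AddCommGroup B] [AddCommGroup C]
    [AddCommGroup D] [Module R A] [Module R B] [Module R C] [Module R D]
    (u : C →ₗ[R] D) (v : B →ₗ[R] C) (w : B →ₗ[R] D) (g : A →ₗ[R] B) (huv : u ∘ₗ v = w) :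
    u ∘ₗ (v ∘ₗ g) = w ∘ₗ g := by
  rw [← LinearMap.comp_assoc, huv]

lemma comp_rw {A B C C' D : Type*} [AddCommGroup A] [AddCommGroup B] [AddCommGroup C]
    [AddCommGroup C'] [AddCommGroup D] [Module R A] [Module R B] [Module R C]
    [Module R C'] [Module R D]
    (u : C →ₗ[R] D) (v : B →ₗ[R] C) (u' : C' →ₗ[R] D) (v' : B →ₗ[R] C')
    (g : A →ₗ[R] B) (huv : u ∘ₗ v = u' ∘ₗ v') :
    u ∘ₗ (v ∘ₗ g) = u' ∘ₗ (v' ∘ₗ g) := by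
  rw [← LinearMap.comp_assoc, huv, LinearMap.comp_assoc]

lemma negOnePow_sq (n : ℤ) : ((n.negOnePow : ℤ)) * (n.negOnePow : ℤ) = 1 := by
  rw [← Units.val_mul, Int.units_mul_self]; rfl

lemma negOnePow_pred (n : ℤ) : (((n-1).negOnePow : ℤ)) = -(n.negOnePow : ℤ) := by
  have := Int.negOnePow_succ (n-1)
  rw [sub_add_cancel] at this
  rw [this]; push_cast; ring

/-- A contraction `(φ, ψ, h)` of `ℤ`-indexed cochain complexes of `R`-modules induces a
contraction `(Φ, Ψ, H)` of the associated endomorphism complexes, where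
`Φ(f) = φ ∘ f ∘ ψ`, `Ψ(g) = ψ ∘ g ∘ φ` and `H(f) = h ∘ f ∘ (ψ ∘ φ) + (-1)^n f ∘ h`. -/
theorem contraction_of_endomorphism_complexes
    (dE : ∀ p q : ℤ, p + 1 = q → (E p →ₗ[R] E q))
    (dF : ∀ p q : ℤ, p + 1 = q → (F p →ₗ[R] F q))
    (hdE : ∀ (p q r : ℤ) (hpq : p + 1 = q) (hqr : q + 1 = r),
      dE q r hqr ∘ₗ dE p q hpq = 0)
    (hdF : ∀ (p q r : ℤ) (hpq : p + 1 = q) (hqr : q + 1 = r),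
      dF q r hqr ∘ₗ dF p q hpq = 0)
    (φ : ∀ i, E i →ₗ[R] F i) (ψ : ∀ i, F i →ₗ[R] E i)
    (hφ : ∀ (p q : ℤ) (hpq : p + 1 = q), φ q ∘ₗ dE p q hpq = dF p q hpq ∘ₗ φ p)
    (hψ : ∀ (p q : ℤ) (hpq : p + 1 = q), ψ q ∘ₗ dF p q hpq = dE p q hpq ∘ₗ ψ p)
    (hφψ : ∀ i, φ i ∘ₗ ψ i = LinearMap.id)
    (h : ∀ p q : ℤ, q + 1 = p → (E p →ₗ[R] E q))
    (hψφ : ∀ (p q r : ℤ) (hqp : q + 1 = p) (hpr : p + 1 = r),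
      ψ p ∘ₗ φ p = LinearMap.id + dE q p hqp ∘ₗ h p q hqp + h r p hpr ∘ₗ dE p r hpr)
    (hhh : ∀ (p q r : ℤ) (hqp : q + 1 = p) (hrq : r + 1 = q),
      h q r hrq ∘ₗ h p q hqp = 0)
    (hφh : ∀ (p q : ℤ) (hqp : q + 1 = p), φ q ∘ₗ h p q hqp = 0)
    (hhψ : ∀ (p q : ℤ) (hqp : q + 1 = p), h p q hqp ∘ₗ ψ p = 0) :
    -- the endomorphism complexes are complexes
    (∀ (n : ℤ) (f : EndCochain R E n) (p q : ℤ) (hpq : p + (n + 1 + 1) = q),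
      endDiff dE (n + 1) (endDiff dE n f) p q hpq = 0) ∧
    (∀ (n : ℤ) (g : EndCochain R F n) (p q : ℤ) (hpq : p + (n + 1 + 1) = q),
      endDiff dF (n + 1) (endDiff dF n g) p q hpq = 0) ∧
    -- `Φ` and `Ψ` are cochain maps
    (∀ (n : ℤ) (f : EndCochain R E n),
      conjMap φ ψ (n + 1) (endDiff dE n f) = endDiff dF n (conjMap φ ψ n f)) ∧
    (∀ (n : ℤ) (g : EndCochain R F n),
      conjMap ψ φ (n + 1) (endDiff dF n g) = endDiff dE n (conjMap ψ φ n g)) ∧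
    -- `Φ ∘ Ψ = id`
    (∀ (n : ℤ) (g : EndCochain R F n), conjMap φ ψ n (conjMap ψ φ n g) = g) ∧
    -- `Ψ ∘ Φ = id + D_E ∘ H + H ∘ D_E`
    (∀ (n : ℤ) (f : EndCochain R E n) (p q : ℤ) (hpq : p + n = q),
      conjMap ψ φ n (conjMap φ ψ n f) p q hpq
        = f p q hpq + endDiff dE (n - 1) (hMap φ ψ h n f) p q (by omega)
          + hMap φ ψ h (n + 1) (endDiff dE n f) p q (by omega)) ∧
    -- side conditions
    (∀ (n : ℤ) (f : EndCochain R E n) (p q : ℤ) (hpq : p + (n - 2) = q),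
      hMap φ ψ h (n - 1) (hMap φ ψ h n f) p q (by omega) = 0) ∧
    (∀ (n : ℤ) (f : EndCochain R E n) (p q : ℤ) (hpq : p + (n - 1) = q),
      conjMap φ ψ (n - 1) (hMap φ ψ h n f) p q hpq = 0) ∧
    (∀ (n : ℤ) (g : EndCochain R F n) (p q : ℤ) (hpq : p + (n - 1) = q),
      hMap φ ψ h n (conjMap ψ φ n g) p q hpq = 0) := by
  refine ⟨?_, ?_, ?_, ?_, ?_, ?_, ?_, ?_, ?_⟩
  · -- D_E ∘ D_E = 0
    intro n f p q hpq
    rw [endDiff_eq dE (n+1) _ p q (p+n+1) (p+1) (by omega) (by omega) (by omega) (by omega),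
        endDiff_eq dE n f p (p+n+1) (p+n) (p+1) (by omega) (by omega) (by omega) (by omega),
        endDiff_eq dE n f (p+1) q (p+n+1) (p+2) (by omega) (by omega) (by omega) (by omega)]
    simp only [LinearMap.comp_sub, LinearMap.sub_comp, LinearMap.comp_smul, LinearMap.smul_comp,
      Int.negOnePow_succ, Units.val_neg, Int.cast_neg, neg_smul, LinearMap.comp_assoc]
    rw [comp_comp_zero _ _ _ (hdE _ _ _ _ _), hdE]
    simp
  · -- D_F ∘ D_F = 0
    intro n g p q hpq
    rw [endDiff_eq dF (n+1) _ p q (p+n+1) (p+1) (by omega) (by omega) (by omega) (by omega),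
        endDiff_eq dF n g p (p+n+1) (p+n) (p+1) (by omega) (by omega) (by omega) (by omega),
        endDiff_eq dF n g (p+1) q (p+n+1) (p+2) (by omega) (by omega) (by omega) (by omega)]
    simp only [LinearMap.comp_sub, LinearMap.sub_comp, LinearMap.comp_smul, LinearMap.smul_comp,
      Int.negOnePow_succ, Units.val_neg, Int.cast_neg, neg_smul, LinearMap.comp_assoc]
    rw [comp_comp_zero _ _ _ (hdF _ _ _ _ _), hdF]
    simp
  · -- Φ is a cochain map
    intro n f
    funext p q hpq
    rw [conjMap_eq, endDiff_eq dE n f p q (p+n) (p+1) rfl rfl (by omega) (by omega),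
        endDiff_eq dF n _ p q (p+n) (p+1) rfl rfl (by omega) (by omega),
        conjMap_eq, conjMap_eq]
    simp only [LinearMap.comp_sub, LinearMap.sub_comp, LinearMap.comp_smul, LinearMap.smul_comp,
      LinearMap.comp_assoc]
    rw [comp_rw _ _ _ _ _ (hφ (p+n) q (by omega)), ← hψ p (p+1) rfl]
  · -- Ψ is a cochain map
    intro n g
    funext p q hpq
    rw [conjMap_eq, endDiff_eq dF n g p q (p+n) (p+1) rfl rfl (by omega) (by omega),
        endDiff_eq dE n _ p q (p+n) (p+1) rfl rfl (by omega) (by omega),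
        conjMap_eq, conjMap_eq]
    simp only [LinearMap.comp_sub, LinearMap.sub_comp, LinearMap.comp_smul, LinearMap.smul_comp,
      LinearMap.comp_assoc]
    rw [comp_rw _ _ _ _ _ (hψ (p+n) q (by omega)), ← hφ p (p+1) rfl]
  · -- Φ ∘ Ψ = id
    intro n g
    funext p q hpq
    rw [conjMap_eq, conjMap_eq]
    simp only [LinearMap.comp_assoc]
    rw [hφψ p, LinearMap.comp_id, comp_rw₁ _ _ _ _ (hφψ q), LinearMap.id_comp]
  · -- Ψ ∘ Φ = id + D ∘ H + H ∘ D
    intro n f p q hpq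
    have LHSeq : conjMap ψ φ n (conjMap φ ψ n f) p q hpq
        = (ψ q ∘ₗ φ q) ∘ₗ (f p q hpq ∘ₗ (ψ p ∘ₗ φ p)) := by
      simp only [conjMap_eq, LinearMap.comp_assoc]
    rw [LHSeq,
      endDiff_eq dE (n-1) _ p q (q-1) (p+1) (by omega) rfl (by omega) (by omega),
      hMap_eq φ ψ h n f p (q-1) q (p-1) hpq rfl (by omega) (by omega) (by omega),
      hMap_eq φ ψ h n f (p+1) q (q+1) p (by omega) (by omega) (by omega) (by omega) (by omega),
      hMap_eq φ ψ h (n+1) _ p q (q+1) (p-1) (by omega) rfl (by omega) (by omega) (by omega),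
      endDiff_eq dE n f p (q+1) q (p+1) hpq rfl (by omega) (by omega),
      endDiff_eq dE n f (p-1) q (q-1) p (by omega) (by omega) (by omega) (by omega),
      hψφ q (q-1) (q+1) (by omega) (by omega),
      hψφ p (p-1) (p+1) (by omega) (by omega),
      hψφ (p+1) p (p+2) (by omega) (by omega)]
    simp only [LinearMap.comp_add, LinearMap.add_comp, LinearMap.comp_sub, LinearMap.sub_comp,
      LinearMap.comp_smul, LinearMap.smul_comp, LinearMap.id_comp, LinearMap.comp_id,
      LinearMap.comp_assoc, Int.negOnePow_succ, negOnePow_pred, Units.val_neg, Int.cast_neg,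
      neg_smul, smul_neg, smul_smul, negOnePow_sq, one_smul]
    rw [hdE p (p+1) (p+2) rfl (by omega), comp_comp_zero _ _ _ (hdE (p-1) p (p+1) (by omega) rfl)]
    simp only [LinearMap.comp_zero, LinearMap.zero_comp, smul_zero, add_zero, zero_add]
    match_scalars <;> simp [pow_two, negOnePow_sq]
  · -- H ∘ H = 0
    intro n f p q hpq
    rw [hMap_eq φ ψ h (n-1) _ p q (q+1) (p-1) (by omega) rfl (by omega) (by omega) (by omega),
        hMap_eq φ ψ h n f p (q+1) (q+2) (p-1) (by omega) rfl (by omega) (by omega) (by omega),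
        hMap_eq φ ψ h n f (p-1) q (q+1) (p-2) (by omega) (by omega) (by omega) (by omega)
          (by omega)]
    simp only [LinearMap.comp_add, LinearMap.add_comp, LinearMap.comp_smul, LinearMap.smul_comp,
      LinearMap.comp_assoc]
    rw [comp_comp_zero _ _ _ (hhh (q+2) (q+1) q (by omega) (by omega)),
        comp_comp_zero _ _ _ (hhψ p (p-1) (by omega)),
        hφh p (p-1) (by omega), hhh p (p-1) (p-2) (by omega) (by omega)]
    simp
  · -- Φ ∘ H = 0
    intro n f p q hpq
    rw [conjMap_eq,
        hMap_eq φ ψ h n f p q (q+1) (p-1) (by omega) rfl (by omega) (by omega) (by omega)]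
    simp only [LinearMap.comp_add, LinearMap.add_comp, LinearMap.comp_smul, LinearMap.smul_comp,
      LinearMap.comp_assoc]
    rw [comp_comp_zero _ _ _ (hφh (q+1) q (by omega)), hhψ p (p-1) (by omega)]
    simp
  · -- H ∘ Ψ = 0
    intro n g p q hpq
    rw [hMap_eq φ ψ h n _ p q (q+1) (p-1) (by omega) rfl (by omega) (by omega) (by omega),
        conjMap_eq, conjMap_eq]
    simp only [LinearMap.comp_assoc]
    rw [comp_comp_zero _ _ _ (hhψ (q+1) q (by omega)), hφh p (p-1) (by omega)]
    simp

end EndComplexContraction
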